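/- Let T be a tree of even order. Then m(T) ≥ 1, and m(T) = 1 if and only if T has a perfect matching. -/

import Mathlib

namespace PaperMM

open SimpleGraph

/-- `M` is a matching of `G`: a set of edges of `G` that are pairwise disjoint. -/
def IsMatchingSet {V : Type} (G : SimpleGraph V) (M : Set (Sym2 V)) : Prop :=
  M ⊆ G.edgeSet ∧ M.Pairwise fun e f => ∀ v : V, ¬(v ∈ e ∧ v ∈ f)

/-- The matching number `μ(G)`: the maximum cardinality of a matching of `G`. -/
noncomputable def matchNum {V : Type} (G : SimpleGraph V) : ℕ :=
  sSup {n | ∃ M : Set (Sym2 V), IsMatchingSet G M ∧ M.ncard = n}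

/-- The set of maximum matchings of `G`. -/
def MaximumMatchings {V : Type} (G : SimpleGraph V) : Set (Set (Sym2 V)) :=
  {M | IsMatchingSet G M ∧ M.ncard = matchNum G}

/-- `m(G)`: the number of maximum matchings of `G`. -/
noncomputable def mm {V : Type} (G : SimpleGraph V) : ℕ := (MaximumMatchings G).ncard

/-- The matching `M` covers the vertex `v`. -/
def Covers {V : Type} (M : Set (Sym2 V)) (v : V) : Prop := ∃ e ∈ M, v ∈ e

/-- `v` is of type A in `G`: some maximum matching of `G` does not cover `v`. -/
def TypeA {V : Type} (G : SimpleGraph V) (v : V) : Prop :=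
  ∃ M ∈ MaximumMatchings G, ¬ Covers M v

/-- `v` is of type B in `G`: every maximum matching of `G` covers `v`. -/
def TypeB {V : Type} (G : SimpleGraph V) (v : V) : Prop := ¬ TypeA G v

/-- `G` has a perfect matching. -/
def HasPerfectMatching {V : Type} (G : SimpleGraph V) : Prop :=
  ∃ M : Set (Sym2 V), IsMatchingSet G M ∧ ∀ v, Covers M v

/-- The degree of `v` in `G`. -/
noncomputable def degS {V : Type} (G : SimpleGraph V) (v : V) : ℕ := (G.neighborSet v).ncard

/-- `G` is an optimal tree: a tree maximising `m` among all trees of the same order. -/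
def OptimalTree {V : Type} [Fintype V] (G : SimpleGraph V) : Prop :=
  G.IsTree ∧ ∀ H : SimpleGraph (Fin (Fintype.card V)), H.IsTree → mm H ≤ mm G

/-- The vertex set of the connected component of `s` in `G - st`. -/
def sideSet {V : Type} (G : SimpleGraph V) (s t : V) : Set V :=
  {v | (G.deleteEdges {s(s, t)}).Reachable s v}

/-- The connected component of `s` in `G - st`, as a graph. -/
def sideGraph {V : Type} (G : SimpleGraph V) (s t : V) :
    SimpleGraph (sideSet G s t) :=
  (G.deleteEdges {s(s, t)}).induce (sideSet G s t)

theorem mem_sideSet_self {V : Type} (G : SimpleGraph V) (s t : V) : s ∈ sideSet G s t :=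
  SimpleGraph.Reachable.refl s

/-- The root of the component of `s` in `G - st`, i.e. `s` itself. -/
def sideRoot {V : Type} (G : SimpleGraph V) (s t : V) : sideSet G s t :=
  ⟨s, mem_sideSet_self G s t⟩

/-- `μ(T_s)` where `T_s` is the component of `s` in `G - st`. -/
noncomputable def sideMu {V : Type} (G : SimpleGraph V) (s t : V) : ℕ := matchNum (sideGraph G s t)

/-- `m(T_s)` where `T_s` is the component of `s` in `G - st`. -/
noncomputable def sideM {V : Type} (G : SimpleGraph V) (s t : V) : ℕ := mm (sideGraph G s t)

/-- `μ(T_s − s)` where `T_s` is the component of `s` in `G - st`. -/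
noncomputable def sideMuDel {V : Type} (G : SimpleGraph V) (s t : V) : ℕ :=
  matchNum ((G.deleteEdges {s(s, t)}).induce (sideSet G s t \ {s}))

/-- `m(T_s − s)` where `T_s` is the component of `s` in `G - st`. -/
noncomputable def sideMDel {V : Type} (G : SimpleGraph V) (s t : V) : ℕ :=
  mm ((G.deleteEdges {s(s, t)}).induce (sideSet G s t \ {s}))

/-- A rooted graph: a vertex type, a graph on it, and a root vertex. -/
structure RGraph : Type 1 where
  V : Type
  G : SimpleGraph V
  root : V

/-- `m(T)` for a rooted graph. -/
noncomputable def RGraph.m (T : RGraph) : ℕ := mm T.G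

/-- `m_0(T) = m(T − r)` for a rooted graph with root `r`. -/
noncomputable def RGraph.m0 (T : RGraph) : ℕ := mm (T.G.induce {v | v ≠ T.root})

/-- `m_1(T)`: the number of maximum matchings of `G` covering `r`. -/
noncomputable def mmCover {V : Type} (G : SimpleGraph V) (r : V) : ℕ :=
  {M | M ∈ MaximumMatchings G ∧ Covers M r}.ncard

/-- The order (number of vertices) of a rooted graph. -/
noncomputable def RGraph.order (T : RGraph) : ℕ := Nat.card T.V

/-- Isomorphism of rooted graphs: a graph isomorphism mapping root to root. -/
def RGraph.RIso (T T' : RGraph) : Prop :=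
  ∃ φ : T.G ≃g T'.G, φ T.root = T'.root

/-- The one-vertex rooted tree `L`. -/
def rL : RGraph := ⟨PUnit, ⊥, PUnit.unit⟩

/-- The fork `F`: the root `0` is adjacent to `1`, which is adjacent to the leaves `2`, `3`. -/
def rF : RGraph :=
  ⟨Fin 4, SimpleGraph.fromRel (fun a b => (a = 0 ∧ b = 1) ∨ (a = 1 ∧ b = 2) ∨ (a = 1 ∧ b = 3)), 0⟩

/-- The rooted tree `B₂*`: a single edge rooted at one endpoint. -/
def rB2 : RGraph := ⟨Fin 2, SimpleGraph.fromRel (fun a b => a = 0 ∧ b = 1), 0⟩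

/-- The rooted tree `A₃*`: a path on three vertices rooted at an endpoint. -/
def rA3 : RGraph :=
  ⟨Fin 3, SimpleGraph.fromRel (fun a b => (a = 0 ∧ b = 1) ∨ (a = 1 ∧ b = 2)), 0⟩

/-- The `k`-claw: the star `K_{1,k}` rooted at its center. -/
def claw (k : ℕ) : RGraph :=
  ⟨Fin (k + 1), SimpleGraph.fromRel (fun a b => a = 0 ∧ b ≠ 0), 0⟩

/-- The chain construction `C`: seven new vertices are added to the rooted tree `T`;
`Sum.inr 0` is the new root `s`, `Sum.inr 1` is the vertex `b` adjacent to `s`, to the new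
leaf `Sum.inr 2`, to the root `Sum.inr 3` of a new fork (with center `Sum.inr 4` and leaves
`Sum.inr 5`, `Sum.inr 6`), and to the old root of `T`. -/
def consC (T : RGraph) : RGraph where
  V := T.V ⊕ Fin 7
  G := SimpleGraph.fromRel (fun a b =>
    (∃ x y, T.G.Adj x y ∧ a = Sum.inl x ∧ b = Sum.inl y) ∨
    (a = Sum.inr 0 ∧ b = Sum.inr 1) ∨
    (a = Sum.inr 1 ∧ b = Sum.inr 2) ∨
    (a = Sum.inr 1 ∧ b = Sum.inr 3) ∨
    (a = Sum.inr 3 ∧ b = Sum.inr 4) ∨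
    (a = Sum.inr 4 ∧ b = Sum.inr 5) ∨
    (a = Sum.inr 4 ∧ b = Sum.inr 6) ∨
    (a = Sum.inr 1 ∧ b = Sum.inl T.root))
  root := Sum.inr 0

/-- `hang T S`: the disjoint union of rooted graphs `T` and `S` together with an edge
joining their roots; the root of the result is the root of `T`. -/
def hang (T S : RGraph) : RGraph where
  V := T.V ⊕ S.V
  G := SimpleGraph.fromRel (fun a b =>
    (∃ x y, T.G.Adj x y ∧ a = Sum.inl x ∧ b = Sum.inl y) ∨
    (∃ x y, S.G.Adj x y ∧ a = Sum.inr x ∧ b = Sum.inr y) ∨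
    (a = Sum.inl T.root ∧ b = Sum.inr S.root))
  root := Sum.inl T.root

/-- The rooted subtree of `G` cut off by the edge `st` on the side of `s`, rooted at `s`. -/
def sideRG {V : Type} (G : SimpleGraph V) (s t : V) : RGraph :=
  ⟨sideSet G s t, sideGraph G s t, sideRoot G s t⟩

/-- `y` lies on the path from `x` to the root of `T`. -/
def OnRootPath (T : RGraph) (x y : T.V) : Prop := ∀ p : T.G.Walk x T.root, y ∈ p.support

/-- The rooted graph `T` contains a `k`-claw: either `T` itself is a `k`-claw, or
there is an edge `xy` of `T` with `y` on the path from `x` to the root such that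
the component of `x` in `T − xy`, rooted at `x`, is a `k`-claw. -/
def ContainsClaw (T : RGraph) (k : ℕ) : Prop :=
  T.RIso (claw k) ∨
  ∃ x y : T.V, T.G.Adj x y ∧ OnRootPath T x y ∧ (sideRG T.G x y).RIso (claw k)

/-- The vertex set of the branch of the rooted graph `(G, r)` containing the
neighbour `x` of `r`: all vertices reachable from `x` avoiding `r`. -/
def branchSet {V : Type} (G : SimpleGraph V) (r x : V) : Set V :=
  {v | ∃ p : G.Walk x v, r ∉ p.support}

/-- `m` of the branch of `(G, r)` at the neighbour `x`. -/
noncomputable def branchM {V : Type} (G : SimpleGraph V) (r x : V) : ℕ :=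
  mm (G.induce (branchSet G r x))

/-- `m_0` of the branch of `(G, r)` at the neighbour `x` (the branch is rooted at `x`). -/
noncomputable def branchM0 {V : Type} (G : SimpleGraph V) (r x : V) : ℕ :=
  mm (G.induce (branchSet G r x \ {x}))

/-- The branch of `(G, r)` at the neighbour `x`, rooted at `x`, is of type A. -/
def BranchTypeA {V : Type} (G : SimpleGraph V) (r x : V) : Prop :=
  ∃ h : x ∈ branchSet G r x, TypeA (G.induce (branchSet G r x)) ⟨x, h⟩

/-- The branch of `(G, r)` at the neighbour `x`, rooted at `x`, is of type B. -/
def BranchTypeB {V : Type} (G : SimpleGraph V) (r x : V) : Prop :=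
  ∃ h : x ∈ branchSet G r x, TypeB (G.induce (branchSet G r x)) ⟨x, h⟩

/-- The bipartition condition for rooted trees: a one-vertex rooted tree fulfils it,
and a rooted tree fulfils it if all of its branches (each rooted at the corresponding
neighbour of the root) fulfil it and have type different from the type of the root. -/
inductive BipCond : {V : Type} → SimpleGraph V → V → Prop where
  | single {V : Type} (G : SimpleGraph V) (r : V) (h : ∀ v : V, v = r) : BipCond G r
  | node {V : Type} (G : SimpleGraph V) (r : V)
      (hrec : ∀ (x : V), G.Adj r x → ∀ (hm : x ∈ branchSet G r x),
        BipCond (G.induce (branchSet G r x)) ⟨x, hm⟩)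
      (htype : ∀ (x : V), G.Adj r x → ∀ (hm : x ∈ branchSet G r x),
        ¬ (TypeA G r ↔ TypeA (G.induce (branchSet G r x)) ⟨x, hm⟩)) :
      BipCond G r

/-- The integer sequence `G_j` with `G_0 = 0`, `G_1 = 1`, `G_{j+2} = 11 G_{j+1} − 9 G_j`. -/
def Gseq : ℕ → ℤ
  | 0 => 0
  | 1 => 1
  | (n + 2) => 11 * Gseq (n + 1) - 9 * Gseq n

/-- Attach one new pendant vertex to the vertex `w` of `H`. -/
def addLeaf {W : Type} (H : SimpleGraph W) (w : W) : SimpleGraph (W ⊕ Unit) :=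
  SimpleGraph.fromRel (fun a b =>
    (∃ x y, H.Adj x y ∧ a = Sum.inl x ∧ b = Sum.inl y) ∨
    (a = Sum.inl w ∧ b = Sum.inr ()))

/-- The 6-vertex spider with legs of lengths 1, 1 and 3 attached to the center `0`. -/
def spider6 : SimpleGraph (Fin 6) :=
  SimpleGraph.fromRel (fun a b =>
    (a = 0 ∧ b = 1) ∨ (a = 0 ∧ b = 2) ∨ (a = 0 ∧ b = 3) ∨ (a = 3 ∧ b = 4) ∨ (a = 4 ∧ b = 5))


/-!
A maximum matching always exists, so `m(T) ≥ 1`. If a maximum matching `M` misses a vertex `u`,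
then `u` has a neighbour `x` (`T` is connected with at least two vertices), `M` covers `x` by
maximality, and exchanging the `M`-edge at `x` for `ux` gives a second maximum matching.
Conversely, a perfect matching is maximum, so by counting every maximum matching is perfect; and
two perfect matchings of a forest coincide, because their symmetric difference is a union of
cycles.
-/

open scoped symmDiff in
theorem _root_.SimpleGraph.IsAcyclic.eq_of_isPerfectMatching {V : Type} [Finite V]
    {G : SimpleGraph V} (hG : G.IsAcyclic)
    {M M' : G.Subgraph} (hM : M.IsPerfectMatching) (hM' : M'.IsPerfectMatching) : M = M' := by
  have hcyc := hM.symmDiff_isCycles hM'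
  have hacyc : (M.spanningCoe ∆ M'.spanningCoe).IsAcyclic :=
    hG.anti (symmDiff_le_sup.trans (sup_le M.spanningCoe_le M'.spanningCoe_le))
  have hbot : M.spanningCoe ∆ M'.spanningCoe = ⊥ := by
    ext v w
    simp only [bot_adj, iff_false]
    intro hvw
    exact (isAcyclic_iff_forall_adj_isBridge.mp hacyc hvw) (hcyc.reachable_deleteEdges hvw)
  have hspan : M.spanningCoe = M'.spanningCoe := symmDiff_eq_bot.mp hbot
  exact Subgraph.ext (by rw [hM.2.verts_eq_univ, hM'.2.verts_eq_univ])
    (congrArg SimpleGraph.Adj hspan)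

section MatchingSet

variable {V : Type} {G : SimpleGraph V} {M N : Set (Sym2 V)} {u v w x : V}

theorem IsMatchingSet.mono (hM : IsMatchingSet G M) (hNM : N ⊆ M) : IsMatchingSet G N :=
  ⟨hNM.trans hM.1, hM.2.mono hNM⟩

theorem IsMatchingSet.eq_of_mem_of_mem (hM : IsMatchingSet G M) (hw : s(v, w) ∈ M)
    (hx : s(v, x) ∈ M) : w = x := by
  by_contra hwx
  exact hM.2 hw hx (fun h => hwx (Sym2.congr_right.mp h)) v
    ⟨Sym2.mem_mk_left _ _, Sym2.mem_mk_left _ _⟩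

theorem IsMatchingSet.insert (hM : IsMatchingSet G M) (hux : G.Adj u x) (hu : ¬Covers M u)
    (hx : ¬Covers M x) : IsMatchingSet G (insert s(u, x) M) := by
  refine ⟨Set.insert_subset hux hM.1, hM.2.insert fun f hf _ => ⟨?_, ?_⟩⟩
  · rintro z ⟨hz, hzf⟩
    rcases Sym2.mem_iff.mp hz with rfl | rfl
    exacts [hu ⟨f, hf, hzf⟩, hx ⟨f, hf, hzf⟩]
  · rintro z ⟨hzf, hz⟩
    rcases Sym2.mem_iff.mp hz with rfl | rfl
    exacts [hu ⟨f, hf, hzf⟩, hx ⟨f, hf, hzf⟩]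

theorem mk_notMem_of_not_covers (hu : ¬Covers M u) : s(u, x) ∉ M :=
  fun h => hu ⟨_, h, Sym2.mem_mk_left _ _⟩

theorem IsMatchingSet.not_covers_sdiff_singleton (hM : IsMatchingSet G M) {e : Sym2 V}
    (he : e ∈ M) (hv : v ∈ e) : ¬Covers (M \ {e}) v := by
  rintro ⟨f, ⟨hf, hfe⟩, hvf⟩
  exact hM.2 hf he hfe v ⟨hvf, hv⟩

def IsMatchingSet.toSubgraph (hM : IsMatchingSet G M) : G.Subgraph where
  verts := {v | Covers M v}
  Adj v w := s(v, w) ∈ M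
  adj_sub h := hM.1 h
  edge_vert h := ⟨_, h, Sym2.mem_mk_left _ _⟩
  symm := ⟨fun _ _ h => by rwa [Sym2.eq_swap]⟩

theorem IsMatchingSet.toSubgraph_isMatching (hM : IsMatchingSet G M) :
    hM.toSubgraph.IsMatching := by
  intro v (hv : Covers M v)
  obtain ⟨e, he, hve⟩ := hv
  obtain ⟨w, rfl⟩ := Sym2.mem_iff_exists.mp hve
  exact ⟨w, he, fun x hx => hM.eq_of_mem_of_mem hx he⟩

theorem IsMatchingSet.toSubgraph_isPerfectMatching (hM : IsMatchingSet G M)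
    (hcov : ∀ v, Covers M v) : hM.toSubgraph.IsPerfectMatching :=
  ⟨hM.toSubgraph_isMatching, fun v => hcov v⟩

theorem IsMatchingSet.edgeSet_toSubgraph (hM : IsMatchingSet G M) :
    hM.toSubgraph.edgeSet = M := by
  ext e
  induction e using Sym2.ind with
  | _ v w => exact Subgraph.mem_edgeSet (G' := hM.toSubgraph)

variable [Finite V]

theorem bddAbove_matchingCards (G : SimpleGraph V) :
    BddAbove {n | ∃ M : Set (Sym2 V), IsMatchingSet G M ∧ M.ncard = n} := by
  refine ⟨Nat.card (Sym2 V), ?_⟩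
  rintro n ⟨M, -, rfl⟩
  exact Set.ncard_le_card M

theorem IsMatchingSet.ncard_le_matchNum (hM : IsMatchingSet G M) : M.ncard ≤ matchNum G :=
  le_csSup (bddAbove_matchingCards G) ⟨M, hM, rfl⟩

theorem exists_mem_maximumMatchings (G : SimpleGraph V) : ∃ M, M ∈ MaximumMatchings G := by
  have hne : {n | ∃ M : Set (Sym2 V), IsMatchingSet G M ∧ M.ncard = n}.Nonempty :=
    ⟨0, ∅, ⟨Set.empty_subset _, Set.pairwise_empty _⟩, Set.ncard_empty _⟩
  exact Nat.sSup_mem hne (bddAbove_matchingCards G)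

theorem one_le_mm (G : SimpleGraph V) : 1 ≤ mm G :=
  (Set.ncard_pos (Set.toFinite _)).mpr (exists_mem_maximumMatchings G)

theorem IsMatchingSet.ncard_setOf_covers (hM : IsMatchingSet G M) :
    {v | Covers M v}.ncard = 2 * M.ncard := by
  classical
  have := Fintype.ofFinite V
  set H := hM.toSubgraph.spanningCoe
  have hdeg : ∀ v, H.degree v = if Covers M v then 1 else 0 := by
    intro v
    split_ifs with hv
    · rw [Subgraph.degree_spanningCoe]
      exact (Subgraph.isMatching_iff_forall_degree.mp hM.toSubgraph_isMatching) v hv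
    · rw [← Nat.le_zero, ← not_lt, degree_pos_iff_exists_adj]
      rintro ⟨w, hw⟩
      exact hv ⟨_, hw, Sym2.mem_mk_left _ _⟩
  have hedges : H.edgeFinset.card = M.ncard := by
    rw [← Set.ncard_coe_finset, coe_edgeFinset, Subgraph.edgeSet_spanningCoe,
      hM.edgeSet_toSubgraph]
  have hsum := H.sum_degrees_eq_twice_card_edges
  simp only [hdeg, Finset.sum_boole, hedges] at hsum
  rw [← hsum, ← Set.ncard_coe_finset, Finset.coe_filter]
  simp

theorem IsMatchingSet.two_mul_ncard_le (hM : IsMatchingSet G M) : 2 * M.ncard ≤ Nat.card V :=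
  hM.ncard_setOf_covers ▸ Set.ncard_le_card _

theorem IsMatchingSet.forall_covers_iff (hM : IsMatchingSet G M) :
    (∀ v, Covers M v) ↔ 2 * M.ncard = Nat.card V := by
  rw [← hM.ncard_setOf_covers, ← Set.eq_univ_iff_ncard, Set.eq_univ_iff_forall]
  rfl

theorem IsMatchingSet.mem_maximumMatchings_of_forall_covers (hM : IsMatchingSet G M)
    (hcov : ∀ v, Covers M v) : M ∈ MaximumMatchings G := by
  refine ⟨hM, le_antisymm hM.ncard_le_matchNum ?_⟩
  obtain ⟨N, hN, hNcard⟩ := exists_mem_maximumMatchings G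
  have := hN.two_mul_ncard_le
  have := hM.forall_covers_iff.mp hcov
  omega

theorem forall_covers_of_mem_maximumMatchings (hN : IsMatchingSet G N)
    (hNcov : ∀ v, Covers N v) (hM : M ∈ MaximumMatchings G) : ∀ v, Covers M v := by
  have := (hN.mem_maximumMatchings_of_forall_covers hNcov).2
  have := hM.2
  have := hM.1.two_mul_ncard_le
  have := hN.forall_covers_iff.mp hNcov
  exact hM.1.forall_covers_iff.mpr (by omega)

theorem eq_of_forall_covers_of_isAcyclic (hG : G.IsAcyclic)
    (hM : IsMatchingSet G M) (hN : IsMatchingSet G N) (hMcov : ∀ v, Covers M v)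
    (hNcov : ∀ v, Covers N v) : M = N := by
  have := hG.eq_of_isPerfectMatching (hM.toSubgraph_isPerfectMatching hMcov)
    (hN.toSubgraph_isPerfectMatching hNcov)
  rw [← hM.edgeSet_toSubgraph, ← hN.edgeSet_toSubgraph, this]

theorem maximumMatchings_eq_singleton_of_isAcyclic (hG : G.IsAcyclic)
    (hM : IsMatchingSet G M) (hcov : ∀ v, Covers M v) : MaximumMatchings G = {M} :=
  Set.eq_singleton_iff_unique_mem.mpr ⟨hM.mem_maximumMatchings_of_forall_covers hcov,
    fun _ hN => eq_of_forall_covers_of_isAcyclic hG hN.1 hM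
      (forall_covers_of_mem_maximumMatchings hM hcov hN) hcov⟩

theorem exists_ne_mem_maximumMatchings (hM : M ∈ MaximumMatchings G) (hu : ¬Covers M u)
    (hux : G.Adj u x) : ∃ N ∈ MaximumMatchings G, N ≠ M := by
  have hx : Covers M x := by
    by_contra hx
    have := (hM.1.insert hux hu hx).ncard_le_matchNum
    rw [Set.ncard_insert_of_notMem (mk_notMem_of_not_covers hu), hM.2] at this
    omega
  obtain ⟨e, he, hxe⟩ := hx
  have hu' : ¬Covers (M \ {e}) u := fun ⟨f, hf, huf⟩ => hu ⟨f, hf.1, huf⟩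
  refine ⟨insert s(u, x) (M \ {e}), ⟨(hM.1.mono Set.sdiff_subset).insert hux hu'
    (hM.1.not_covers_sdiff_singleton he hxe), ?_⟩,
    fun h => mk_notMem_of_not_covers hu (h ▸ Set.mem_insert _ _)⟩
  rw [Set.ncard_insert_of_notMem (mk_notMem_of_not_covers hu'),
    Set.ncard_sdiff_singleton_add_one he, hM.2]

end MatchingSet

/-- for a tree of even order, `m(T) ≥ 1`, with `m(T) = 1` iff `T` has a
perfect matching. -/
theorem stmt_0 {V : Type} [Fintype V] (G : SimpleGraph V)
    (htree : G.IsTree) (heven : Even (Fintype.card V)) :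
    1 ≤ mm G ∧ (mm G = 1 ↔ HasPerfectMatching G) := by
  refine ⟨one_le_mm G, fun hmm => ?_, fun ⟨M, hM, hcov⟩ => ?_⟩
  · have : Nontrivial V := by
      have := htree.connected.nonempty
      have := Fintype.card_pos (α := V)
      rw [← Fintype.one_lt_card_iff_nontrivial]
      obtain ⟨k, hk⟩ := heven
      omega
    obtain ⟨M, hM⟩ := exists_mem_maximumMatchings G
    refine ⟨M, hM.1, fun u => by_contra fun hu => ?_⟩
    obtain ⟨x, hux⟩ := htree.connected.preconnected.exists_adj_of_nontrivial u
    obtain ⟨N, hN, hNM⟩ := exists_ne_mem_maximumMatchings hM hu hux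
    exact hNM ((Set.ncard_le_one_iff (Set.toFinite _)).mp hmm.le hN hM)
  · rw [mm, maximumMatchings_eq_singleton_of_isAcyclic htree.isAcyclic hM hcov,
      Set.ncard_singleton]

end PaperMM
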